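/- arXiv:2201.13002 — 3 statements merged into one kernel-verified Lean document; each statement's English description precedes it below -/
import Mathlib

section
/- If the conductor C_R is not contained in m_R², then there exists ω ∈ Ω_{R/k} with λ_R(ω) = 0 whose image in Ω_{(R/m_R²)/k} (the Kähler differentials of R/m_R² over k) is nonzero; in particular, R has nonzero differential torsion. -/
open PowerSeries
set_option synthInstance.maxHeartbeats 1000000
set_option maxHeartbeats 1000000

noncomputable section

def mxl {k : Type*} [Field k] (R : Subalgebra k (PowerSeries k)) : Ideal R :=
  RingHom.ker ((constantCoeff : PowerSeries k →+* k).comp R.val.toRingHom)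

set_option linter.unusedSectionVars false

section Aux

variable {k : Type*} [Field k] [CharZero k]

lemma dXpow (m : ℕ) : derivativeFun ((X:PowerSeries k)^(m+1)) = C ((m+1 : ℕ) : k) * X^m := by
  ext j
  rw [show ∀ (f : PowerSeries k) (n : ℕ), coeff n (derivativeFun f) = coeff (n+1) f * (n+1) from fun f n => coeff_derivative f n]
  simp only [coeff_X_pow, coeff_C_mul]
  by_cases h : j = m
  · subst h; simp
  · have : ¬ (j + 1 = m + 1) := by omega
    simp [h, this]

lemma antider (ψ : PowerSeries k) (N : ℕ) :
    ∃ σ : PowerSeries k, derivativeFun ((X:PowerSeries k)^(N+1) * σ) = X^N * ψ := by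
  set σ : PowerSeries k := PowerSeries.mk (fun j => (((N+1+j : ℕ) : k))⁻¹ * coeff j ψ) with hσ
  refine ⟨σ, ?_⟩
  have key : X * derivativeFun σ + C ((N+1 : ℕ) : k) * σ = ψ := by
    ext j
    rw [map_add, coeff_C_mul, hσ, coeff_mk]
    rcases j with _ | i
    · have h0 : (coeff 0) ((X:PowerSeries k) * derivativeFun σ) = 0 := by
        have : constantCoeff ((X:PowerSeries k) * derivativeFun σ) = 0 := by
          rw [map_mul]; simp
        simpa [PowerSeries.coeff_zero_eq_constantCoeff] using this
      rw [h0]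
      have hne : ((N+1+0 : ℕ) : k) ≠ 0 := Nat.cast_ne_zero.mpr (by omega)
      push_cast at hne ⊢
      field_simp
      ring
    · rw [coeff_succ_X_mul, show ∀ (f : PowerSeries k) (n : ℕ), coeff n (derivativeFun f) = coeff (n+1) f * (n+1) from fun f n => coeff_derivative f n, coeff_mk]
      have hne : ((N+1+(i+1) : ℕ) : k) ≠ 0 := Nat.cast_ne_zero.mpr (by omega)
      push_cast at hne ⊢
      field_simp
      ring
  rw [derivativeFun_mul, dXpow]
  calc (X:PowerSeries k)^(N+1) • derivativeFun σ + σ • (C ((N+1:ℕ):k) * X^N)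
      = X^N * (X * derivativeFun σ + C ((N+1 : ℕ) : k) * σ) := by
        rw [smul_eq_mul, smul_eq_mul]; ring
    _ = X^N * ψ := by rw [key]

lemma ordsplit (f : PowerSeries k) (hf : f ≠ 0) (h0 : constantCoeff f = 0) :
    ∃ (a : ℕ) (f₁ : PowerSeries k), f = X^(a+1) * f₁ ∧ constantCoeff f₁ ≠ 0 := by
  have hex : ∃ i, coeff i f ≠ 0 := by
    by_contra hno
    push_neg at hno
    exact hf (PowerSeries.ext fun i => by rw [hno i, map_zero])
  classical
  set n := Nat.find hex with hn
  have hcn : coeff n f ≠ 0 := Nat.find_spec hex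
  have hlow : ∀ j < n, coeff j f = 0 := by
    intro j hj
    by_contra hne
    have := Nat.find_min' hex hne
    omega
  have hn1 : 1 ≤ n := by
    rcases Nat.eq_zero_or_pos n with h | h
    · exfalso; apply hcn; rw [h]; simpa [PowerSeries.coeff_zero_eq_constantCoeff] using h0
    · exact h
  obtain ⟨a, ha⟩ : ∃ a, n = a + 1 := ⟨n - 1, by omega⟩
  have hdvd : (X:PowerSeries k)^n ∣ f := X_pow_dvd_iff.mpr hlow
  obtain ⟨f₁, hf₁⟩ := hdvd
  refine ⟨a, f₁, by rw [← ha, ← hf₁], ?_⟩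
  intro hc
  apply hcn
  rw [hf₁]
  have : (coeff (0 + n)) ((X:PowerSeries k) ^ n * f₁) = coeff 0 f₁ := coeff_X_pow_mul f₁ n 0
  rw [Nat.zero_add] at this
  rw [this]
  simpa [PowerSeries.coeff_zero_eq_constantCoeff] using hc

end Aux

section Mod3
variable {k : Type*} [Field k] {A : Type*} [CommRing A] [Algebra k A]
variable (π : A →+* k) (φ χ : A →ₗ[k] k)

lemma derlaw (hπ : ∀ c : k, π (algebraMap k A c) = c)
    (hsq : ∀ x y : A, π x = 0 → π y = 0 → x * y = 0)
    (f : A →ₗ[k] k) (hf1 : f 1 = 0) (x y : A) :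
    f (x * y) = π x * f y + π y * f x := by
  have hx0 : π (x - algebraMap k A (π x)) = 0 := by simp [hπ]
  have hy0 : π (y - algebraMap k A (π y)) = 0 := by simp [hπ]
  have h0 := hsq _ _ hx0 hy0
  have h1 : x * y = algebraMap k A (π x) * y + algebraMap k A (π y) * x
      - algebraMap k A (π x) * algebraMap k A (π y) := by linear_combination h0
  rw [h1, map_sub, map_add, ← Algebra.smul_def, ← Algebra.smul_def, ← Algebra.smul_def,
    map_smul, map_smul, map_smul]
  have : f (algebraMap k A (π y)) = 0 := by
    rw [show algebraMap k A (π y) = π y • (1:A) by rw [Algebra.smul_def, mul_one], map_smul, hf1,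
      smul_zero]
  rw [this]
  simp only [smul_eq_mul, mul_zero, sub_zero]

def mod3smul : SMul A (k × k × k) :=
  ⟨fun a m => (π a * m.1, π a * m.2.1, π a * m.2.2 + φ a * m.1 + χ a * m.2.1)⟩

def mod3module (hπ : ∀ c : k, π (algebraMap k A c) = c)
    (hsq : ∀ x y : A, π x = 0 → π y = 0 → x * y = 0)
    (hφ1 : φ 1 = 0) (hχ1 : χ 1 = 0) :
    Module A (k × k × k) :=
  letI := mod3smul π φ χ
  { smul := (mod3smul π φ χ).smul
    one_smul := by
      intro m
      show (π 1 * m.1, π 1 * m.2.1, π 1 * m.2.2 + φ 1 * m.1 + χ 1 * m.2.1) = m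
      simp [hφ1, hχ1]
    mul_smul := by
      intro a b m
      show (π (a*b) * m.1, π (a*b) * m.2.1, π (a*b) * m.2.2 + φ (a*b) * m.1 + χ (a*b) * m.2.1)
        = (π a * (π b * m.1), π a * (π b * m.2.1),
            π a * (π b * m.2.2 + φ b * m.1 + χ b * m.2.1) + φ a * (π b * m.1) + χ a * (π b * m.2.1))
      rw [derlaw π hπ hsq φ hφ1 a b, derlaw π hπ hsq χ hχ1 a b, map_mul]
      refine Prod.ext (by ring) (Prod.ext (by ring) (by ring))
    smul_zero := by
      intro a
      show (π a * 0, π a * 0, π a * 0 + φ a * 0 + χ a * 0) = (0,0,0)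
      simp
    smul_add := by
      intro a m n
      show (π a * (m.1+n.1), π a * (m.2.1+n.2.1), π a * (m.2.2+n.2.2) + φ a * (m.1+n.1) + χ a * (m.2.1+n.2.1))
        = (π a * m.1 + π a * n.1, π a * m.2.1 + π a * n.2.1,
          (π a * m.2.2 + φ a * m.1 + χ a * m.2.1) + (π a * n.2.2 + φ a * n.1 + χ a * n.2.1))
      refine Prod.ext (by ring) (Prod.ext (by ring) (by ring))
    add_smul := by
      intro a b m
      show (π (a+b) * m.1, π (a+b) * m.2.1, π (a+b) * m.2.2 + φ (a+b) * m.1 + χ (a+b) * m.2.1)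
        = ((π a * m.1, π a * m.2.1, π a * m.2.2 + φ a * m.1 + χ a * m.2.1) : k × k × k)
          + (π b * m.1, π b * m.2.1, π b * m.2.2 + φ b * m.1 + χ b * m.2.1)
      simp only [map_add, Prod.mk_add_mk]
      refine Prod.ext (by ring) (Prod.ext (by ring) (by ring))
    zero_smul := by
      intro m
      show (π 0 * m.1, π 0 * m.2.1, π 0 * m.2.2 + φ 0 * m.1 + χ 0 * m.2.1) = (0,0,0)
      simp }

def mod3tower (hπ : ∀ c : k, π (algebraMap k A c) = c)
    (hsq : ∀ x y : A, π x = 0 → π y = 0 → x * y = 0)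
    (hφ1 : φ 1 = 0) (hχ1 : χ 1 = 0) :
    @IsScalarTower k A (k × k × k) Algebra.toSMul (mod3module π φ χ hπ hsq hφ1 hχ1).toSMul
      (Prod.instModule).toSMul := by
  letI := mod3module π φ χ hπ hsq hφ1 hχ1
  refine ⟨fun c a m => ?_⟩
  show (π (c • a) * m.1, π (c • a) * m.2.1, π (c • a) * m.2.2 + φ (c • a) * m.1 + χ (c • a) * m.2.1)
    = c • (π a * m.1, π a * m.2.1, π a * m.2.2 + φ a * m.1 + χ a * m.2.1)
  have hπc : π (c • a) = c * π a := by
    rw [Algebra.smul_def, map_mul, hπ]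
  rw [hπc, map_smul φ, map_smul χ]
  show _ = (c * (π a * m.1), c * (π a * m.2.1), c * (π a * m.2.2 + φ a * m.1 + χ a * m.2.1))
  simp only [smul_eq_mul]
  refine Prod.ext (by ring) (Prod.ext (by ring) (by ring))

def mod3der (hπ : ∀ c : k, π (algebraMap k A c) = c)
    (hsq : ∀ x y : A, π x = 0 → π y = 0 → x * y = 0)
    (hφ1 : φ 1 = 0) (hχ1 : χ 1 = 0) :
    @Derivation k A (k × k × k) _ _ _ _ (mod3module π φ χ hπ hsq hφ1 hχ1) _ := by
  letI := mod3module π φ χ hπ hsq hφ1 hχ1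
  refine
  { toFun := fun a => (χ a, -φ a, 0)
    map_add' := by
      intro a b; simp only [map_add]
      refine Prod.ext rfl (Prod.ext ?_ ?_) <;> simp <;> ring
    map_smul' := by
      intro c a
      simp only [map_smul, RingHom.id_apply]
      refine Prod.ext rfl (Prod.ext ?_ ?_) <;> simp
    map_one_eq_zero' := ?_
    leibniz' := ?_ }
  · show ((χ 1, -φ 1, 0) : k × k × k) = 0
    rw [hφ1, hχ1]; simp
  · intro a b
    show ((χ (a*b), -φ (a*b), 0) : k × k × k)
      = (π a * χ b, π a * (-φ b), π a * 0 + φ a * χ b + χ a * (-φ b))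
        + (π b * χ a, π b * (-φ a), π b * 0 + φ b * χ a + χ b * (-φ a))
    rw [derlaw π hπ hsq φ hφ1 a b, derlaw π hπ hsq χ hχ1 a b]
    simp only [Prod.mk_add_mk, Prod.mk.injEq]
    refine ⟨trivial, by ring, by ring⟩

end Mod3

section Jdef
variable {k : Type*} [Field k]

def Jd (R : Subalgebra k (PowerSeries k)) (l : ℕ) : Ideal R where
  carrier := {x | (X:PowerSeries k)^l ∣ (x : PowerSeries k)}
  add_mem' := by intro a b ha hb; exact dvd_add ha hb
  zero_mem' := dvd_zero _
  smul_mem' := by intro c x hx; exact Dvd.dvd.mul_left hx _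

lemma mem_Jd {R : Subalgebra k (PowerSeries k)} {l : ℕ} {x : R} :
    x ∈ Jd R l ↔ (X:PowerSeries k)^l ∣ (x : PowerSeries k) := Iff.rfl

end Jdef

set_option maxHeartbeats 10000000 in
theorem stmt2aux {k : Type*} [Field k] [IsAlgClosed k] [CharZero k]
    (R : Subalgebra k (PowerSeries k)) (hR : R ≠ ⊤)
    (hN : ∃ N : ℕ, 1 ≤ N ∧ ∀ g : PowerSeries k, (X : PowerSeries k) ^ N * g ∈ R)
    (lam : Ω[↥R⁄k] →ₗ[↥R] PowerSeries k)
    (hlam : ∀ f : R, lam (KaehlerDifferential.D k ↥R f) = derivativeFun (f : PowerSeries k))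
    (hC : ¬ ∀ r : R, (∀ g : PowerSeries k, (r : PowerSeries k) * g ∈ R) → r ∈ (mxl R) ^ 2) :
    ∃ ω : Ω[↥R⁄k], lam ω = 0 ∧
      (KaehlerDifferential.map k k ↥R (↥R ⧸ (mxl R) ^ 2)) ω ≠ 0 ∧
      ω ∉ ⨅ l : ℕ, ((mxl R) ^ (l + 1) • ⊤ : Submodule ↥R (Ω[↥R⁄k])) := by
  classical
  push_neg at hC
  obtain ⟨r, hrC, hr2⟩ := hC
  have mem_m : ∀ x : R, x ∈ mxl R ↔ constantCoeff (x : PowerSeries k) = 0 := by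
    intro x; rw [mxl, RingHom.mem_ker]; rfl
  -- if an element of the conductor has nonzero constant term, R = ⊤
  have htop : ∀ s : PowerSeries k, (∀ g, s * g ∈ R) → constantCoeff s ≠ 0 → False := by
    intro s hs h0
    apply hR
    rw [eq_top_iff]
    intro g _
    have := hs (s⁻¹ * g)
    rwa [← mul_assoc, PowerSeries.mul_inv_cancel s h0, one_mul] at this
  have hr0 : constantCoeff (r : PowerSeries k) = 0 := by
    by_contra h
    exact htop _ hrC h
  have hrm : r ∈ mxl R := (mem_m r).2 hr0
  have hrne : (r : PowerSeries k) ≠ 0 := by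
    intro h
    apply hr2
    have : r = 0 := by exact_mod_cast Subtype.ext h
    rw [this]; exact zero_mem _
  obtain ⟨nn, r₁, hrval, hr₁0⟩ := ordsplit (r : PowerSeries k) hrne hr0
  -- nn ≥ 1, i.e. order of r is at least 2
  have hnn : 1 ≤ nn := by
    by_contra h
    have hnn0 : nn = 0 := by omega
    subst hnn0
    apply hR
    rw [eq_top_iff]
    intro g _
    have hXh : ∀ h : PowerSeries k, X * h ∈ R := by
      intro h
      have h2 := hrC (r₁⁻¹ * h)
      have : (r : PowerSeries k) * (r₁⁻¹ * h) = X * h := by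
        rw [hrval]
        calc X^(0+1) * r₁ * (r₁⁻¹ * h) = X * (r₁ * r₁⁻¹) * h := by ring
          _ = X * h := by rw [PowerSeries.mul_inv_cancel r₁ hr₁0, mul_one]
      rwa [this] at h2
    obtain ⟨h, hh⟩ : (X : PowerSeries k) ∣ (g - C (constantCoeff g)) := by
      rw [X_dvd_iff]; simp
    have : g = C (constantCoeff g) + X * h := by rw [← hh]; ring
    rw [this]
    exact add_mem (by exact Subalgebra.algebraMap_mem R _) (hXh h)
  -- basic bounds on powers of the maximal ideal
  have hm1 : mxl R ≤ Jd R 1 := by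
    intro x hx
    rw [mem_Jd, pow_one, X_dvd_iff]
    exact (mem_m x).1 hx
  have hml : ∀ l, (mxl R)^(l+1) ≤ Jd R (l+1) := by
    intro l
    induction l with
    | zero => rw [pow_one]; exact hm1
    | succ l ih =>
      rw [pow_succ]
      refine Ideal.mul_le.2 (fun a ha b hb => ?_)
      rw [mem_Jd]
      have h1 : (X:PowerSeries k)^(l+1) ∣ (a : PowerSeries k) := (ih ha)
      have h2 : (X:PowerSeries k) ∣ (b : PowerSeries k) := by
        have := hm1 hb; rwa [mem_Jd, pow_one] at this
      have : ((a*b : R) : PowerSeries k) = (a : PowerSeries k) * b := rfl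
      rw [this, pow_succ]
      exact mul_dvd_mul h1 h2
  -- the dichotomy: existence of v independent from r modulo m²
  have hnotall : ¬ ∀ w : R, w ∈ mxl R → ∃ c : k, w - c • r ∈ (mxl R)^2 := by
    intro hall
    have hsl : ∀ l : ℕ, mxl R ≤ Ideal.span {r} ⊔ (mxl R)^(l+1) := by
      intro l
      induction l with
      | zero =>
        have h1 : (mxl R)^(0+1) = mxl R := pow_one _
        rw [h1]
        exact le_sup_right
      | succ l ih =>
        intro x hx
        obtain ⟨c, hc⟩ := hall x hx
        have h2 : (mxl R)^2 ≤ Ideal.span {r} ⊔ (mxl R)^(l+1+1) := by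
          rw [pow_two]
          refine Ideal.mul_le.2 (fun a ha b hb => ?_)
          obtain ⟨s, hs, w, hw, hsw⟩ := Submodule.mem_sup.1 (ih ha)
          rw [← hsw, add_mul]
          refine Submodule.add_mem _ (Submodule.mem_sup_left (Ideal.mul_mem_right b _ hs)) ?_
          refine Submodule.mem_sup_right ?_
          have hmm : w * b ∈ (mxl R)^(l+1) * mxl R := Ideal.mul_mem_mul hw hb
          rwa [← pow_succ] at hmm
        have hx2 : x = c • r + (x - c • r) := by rw [add_sub_cancel]
        rw [hx2]
        exact Submodule.add_mem _
          (Submodule.mem_sup_left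
            (Submodule.smul_of_tower_mem _ c (Ideal.mem_span_singleton_self r)))
          (h2 hc)
    have hmXn : ∀ x : R, x ∈ mxl R → (X:PowerSeries k)^(nn+1) ∣ (x : PowerSeries k) := by
      intro x hx
      obtain ⟨s, hs, w, hw, hsum⟩ := Submodule.mem_sup.1 (hsl (nn+1) hx)
      obtain ⟨a, ha⟩ := Ideal.mem_span_singleton'.1 hs
      have h1 : (X:PowerSeries k)^(nn+1) ∣ (s : PowerSeries k) := by
        rw [← ha]
        have hcoe : ((a*r : R) : PowerSeries k) = (a : PowerSeries k) * (r : PowerSeries k) := rfl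
        rw [hcoe, hrval]
        exact Dvd.dvd.mul_left (dvd_mul_right _ _) _
      have h2 : (X:PowerSeries k)^(nn+1) ∣ (w : PowerSeries k) := by
        have h3 := hml (nn+1) hw
        rw [mem_Jd] at h3
        exact dvd_trans (pow_dvd_pow X (by omega)) h3
      have hcoe2 : (x : PowerSeries k) = (s : PowerSeries k) + (w : PowerSeries k) := by
        rw [← hsum]; rfl
      rw [hcoe2]
      exact dvd_add h1 h2
    have hm2 : ∀ x : R, x ∈ (mxl R)^2 → (X:PowerSeries k)^(2*(nn+1)) ∣ (x : PowerSeries k) := by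
      intro x hx
      rw [pow_two] at hx
      have hle : (mxl R) * (mxl R) ≤ Jd R (2*(nn+1)) := by
        refine Ideal.mul_le.2 (fun a ha b hb => ?_)
        rw [mem_Jd]
        have hcoe : ((a*b : R) : PowerSeries k) = (a : PowerSeries k) * (b : PowerSeries k) := rfl
        rw [hcoe, two_mul, pow_add]
        exact mul_dvd_mul (hmXn a ha) (hmXn b hb)
      exact hle hx
    have hXel : (r : PowerSeries k) * (X * r₁⁻¹) = X^(nn+2) := by
      rw [hrval]
      calc X^(nn+1) * r₁ * (X * r₁⁻¹) = X^(nn+2) * (r₁ * r₁⁻¹) := by ring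
        _ = X^(nn+2) := by rw [PowerSeries.mul_inv_cancel _ hr₁0, mul_one]
    set sR : R := ⟨(r : PowerSeries k) * (X * r₁⁻¹), hrC _⟩ with hsR
    have hsm : sR ∈ mxl R := by
      rw [mem_m]
      show constantCoeff ((r : PowerSeries k) * (X * r₁⁻¹)) = 0
      rw [map_mul, hr0, zero_mul]
    obtain ⟨c, hc⟩ := hall sR hsm
    have hdvd2 := hm2 _ hc
    have hcoe3 : ((sR - c • r : R) : PowerSeries k)
        = X^(nn+2) - C c * (r : PowerSeries k) := by
      have e1 : ((sR - c • r : R) : PowerSeries k)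
          = (sR : PowerSeries k) - ((c • r : R) : PowerSeries k) := rfl
      have e2 : (sR : PowerSeries k) = X^(nn+2) := by rw [hsR]; exact hXel
      have e3 : ((c • r : R) : PowerSeries k) = C c * (r : PowerSeries k) := by
        have : ((c • r : R) : PowerSeries k) = c • (r : PowerSeries k) := rfl
        rw [this, smul_eq_C_mul]
      rw [e1, e2, e3]
    rw [hcoe3] at hdvd2
    have hc0 : c = 0 := by
      have h := X_pow_dvd_iff.1 hdvd2 (nn+1) (by omega)
      rw [map_sub, coeff_X_pow] at h
      have h1 : coeff (nn+1) (C c * (r : PowerSeries k)) = c * constantCoeff r₁ := by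
        rw [coeff_C_mul, hrval]
        congr 1
        have h5 := coeff_X_pow_mul r₁ (nn+1) 0
        rw [Nat.zero_add] at h5
        rw [h5]
        exact PowerSeries.coeff_zero_eq_constantCoeff_apply r₁
      rw [h1] at h
      have hne : ¬(nn+1 = nn+2) := by omega
      rw [if_neg hne] at h
      rw [zero_sub, neg_eq_zero] at h
      exact (mul_eq_zero.1 h).resolve_right hr₁0
    rw [hc0] at hdvd2
    simp only [map_zero, zero_mul, sub_zero] at hdvd2
    have h := X_pow_dvd_iff.1 hdvd2 (nn+2) (by omega)
    rw [coeff_X_pow, if_pos rfl] at h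
    exact one_ne_zero h
  push_neg at hnotall
  obtain ⟨v, hvm, hvnc⟩ := hnotall
  have hvind : ∀ a b : k, a • v + b • r ∈ (mxl R)^2 → a = 0 ∧ b = 0 := by
    intro a b hab
    by_cases ha : a = 0
    · subst ha
      refine ⟨rfl, ?_⟩
      rw [zero_smul, zero_add] at hab
      by_contra hb
      apply hr2
      have : r = b⁻¹ • (b • r) := by rw [smul_smul, inv_mul_cancel₀ hb, one_smul]
      rw [this]
      exact Submodule.smul_of_tower_mem _ _ hab
    · exfalso
      apply hvnc (-(a⁻¹*b))
      have : v - -(a⁻¹*b) • r = a⁻¹ • (a • v + b • r) := by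
        rw [neg_smul, sub_neg_eq_add, smul_add, smul_smul, smul_smul, inv_mul_cancel₀ ha, one_smul]
      rw [this]
      exact Submodule.smul_of_tower_mem _ _ hab
  have hv0 : constantCoeff (v : PowerSeries k) = 0 := (mem_m v).1 hvm
  have hvne : (v : PowerSeries k) ≠ 0 := by
    intro h
    apply hvnc 0
    have : v = 0 := by exact_mod_cast Subtype.ext h
    rw [this]
    have h0 : (0 : R) - (0:k) • r = 0 := by
      rw [zero_smul, sub_zero]
    rw [h0]
    exact zero_mem _
  obtain ⟨dd, v₁, hvval, hv₁0⟩ := ordsplit (v : PowerSeries k) hvne hv0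
  -- the construction of ω
  set ψ : PowerSeries k := C ((dd+1:ℕ):k) * v₁ * derivativeFun r₁
      - C ((nn+1:ℕ):k) * r₁ * derivativeFun v₁ with hψ
  obtain ⟨σ, hσ⟩ := antider ψ (nn+dd+2)
  have key3 : C ((dd+1:ℕ):k) * ((v:PowerSeries k) * derivativeFun (r:PowerSeries k))
      - C ((nn+1:ℕ):k) * ((r:PowerSeries k) * derivativeFun (v:PowerSeries k))
      = X^(nn+dd+2) * ψ := by
    rw [hrval, hvval, derivativeFun_mul, derivativeFun_mul, dXpow, dXpow, hψ]
    simp only [smul_eq_mul]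
    ring
  have hcc : constantCoeff (r₁ * v₁) ≠ 0 := by
    rw [map_mul]; exact mul_ne_zero hr₁0 hv₁0
  set z : PowerSeries k := X * σ * (r₁ * v₁)⁻¹ with hzdef
  have hz : (r : PowerSeries k) * z * (v : PowerSeries k) = X^(nn+dd+3) * σ := by
    rw [hrval, hvval, hzdef]
    calc X ^ (nn + 1) * r₁ * (X * σ * (r₁ * v₁)⁻¹) * (X ^ (dd + 1) * v₁)
        = X^(nn+dd+3) * σ * ((r₁ * v₁) * (r₁ * v₁)⁻¹) := by ring
      _ = X^(nn+dd+3) * σ := by rw [PowerSeries.mul_inv_cancel _ hcc, mul_one]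
  set aR : R := ⟨(r : PowerSeries k) * z, hrC z⟩ with haR
  have haRm : aR ∈ mxl R := by
    rw [mem_m]
    show constantCoeff ((r : PowerSeries k) * z) = 0
    rw [map_mul, hr0, zero_mul]
  set uR : R := aR * v with huRdef
  have huR2 : uR ∈ (mxl R)^2 := by
    rw [pow_two]
    exact Ideal.mul_mem_mul haRm hvm
  set c₁ : R := ((dd+1:ℕ):k) • v with hc₁
  set c₂ : R := ((nn+1:ℕ):k) • r with hc₂
  set ω : Ω[↥R⁄k] := c₁ • (KaehlerDifferential.D k ↥R) r - c₂ • (KaehlerDifferential.D k ↥R) v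
      - (KaehlerDifferential.D k ↥R) uR with hω
  -- ============ nonvanishing of the image mod m² ============
  let Aq := (↥R ⧸ (mxl R)^2)
  let mk0 : ↥R →+* Aq := Ideal.Quotient.mk ((mxl R)^2)
  let π₀ : ↥R →+* k := (constantCoeff : PowerSeries k →+* k).comp R.val.toRingHom
  have hπ₀ : ∀ x : R, π₀ x = constantCoeff (x : PowerSeries k) := fun x => rfl
  have hker : ∀ x : ↥R, x ∈ (mxl R)^2 → π₀ x = 0 := by
    intro x hx
    have hxm : x ∈ mxl R := Ideal.pow_le_self two_ne_zero hx
    exact (mem_m x).1 hxm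
  let π : Aq →+* k := Ideal.Quotient.lift _ π₀ hker
  have hπmk : ∀ x : ↥R, π (mk0 x) = π₀ x := fun x => Ideal.Quotient.lift_mk _ _ _
  have halgmk : ∀ c : k, algebraMap k Aq c = mk0 (algebraMap k ↥R c) := fun c => rfl
  have hπalg : ∀ c : k, π (algebraMap k Aq c) = c := by
    intro c
    rw [halgmk, hπmk, hπ₀]
    have : ((algebraMap k ↥R c : ↥R) : PowerSeries k) = C c := rfl
    rw [this, constantCoeff_C]
  have hsq : ∀ x y : Aq, π x = 0 → π y = 0 → x * y = 0 := by
    intro x y hx hy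
    obtain ⟨x', rfl⟩ := Ideal.Quotient.mk_surjective x
    obtain ⟨y', rfl⟩ := Ideal.Quotient.mk_surjective y
    have hx' : x' ∈ mxl R := (mem_m x').2 (by rw [← hπ₀ x', ← hπmk x']; exact hx)
    have hy' : y' ∈ mxl R := (mem_m y').2 (by rw [← hπ₀ y', ← hπmk y']; exact hy)
    have h1 : x' * y' ∈ (mxl R)^2 := by rw [pow_two]; exact Ideal.mul_mem_mul hx' hy'
    have : (Ideal.Quotient.mk ((mxl R)^2) x') * (Ideal.Quotient.mk ((mxl R)^2) y')
        = Ideal.Quotient.mk ((mxl R)^2) (x' * y') := (map_mul _ _ _).symm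
    rw [this]
    exact Ideal.Quotient.eq_zero_iff_mem.2 h1
  have hmks : ∀ (c : k) (x : ↥R), mk0 (c • x) = c • mk0 x := by
    intro c x
    rfl
  -- linear independence of 1, v, r in R/m²
  have hind : LinearIndependent k ![(1 : Aq), mk0 v, mk0 r] := by
    rw [Fintype.linearIndependent_iff]
    intro g hg
    rw [Fin.sum_univ_three] at hg
    have hg' : g 0 • (1 : Aq) + g 1 • mk0 v + g 2 • mk0 r = 0 := hg
    have hlift : mk0 ((g 0) • 1 + (g 1) • v + (g 2) • r) = 0 := by
      rw [map_add, map_add, hmks, hmks, hmks]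
      exact hg'
    have hmem : (g 0) • (1:↥R) + (g 1) • v + (g 2) • r ∈ (mxl R)^2 :=
      Ideal.Quotient.eq_zero_iff_mem.1 hlift
    have hc0 : constantCoeff (((g 0) • (1:↥R) + (g 1) • v + (g 2) • r : ↥R) : PowerSeries k)
        = g 0 := by
      have e : (((g 0) • (1:↥R) + (g 1) • v + (g 2) • r : ↥R) : PowerSeries k)
          = g 0 • (1 : PowerSeries k) + g 1 • (v : PowerSeries k)
            + g 2 • (r : PowerSeries k) := rfl
      rw [e, map_add, map_add, smul_eq_C_mul, smul_eq_C_mul, smul_eq_C_mul, map_mul, map_mul,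
        map_mul, hr0, hv0, constantCoeff_C]
      simp
    have hg0 : g 0 = 0 := by
      rw [← hc0]
      exact (mem_m _).1 (Ideal.pow_le_self two_ne_zero hmem)
    rw [hg0, zero_smul, zero_add] at hmem
    obtain ⟨hg1, hg2⟩ := hvind _ _ hmem
    intro i
    fin_cases i
    · exact hg0
    · exact hg1
    · exact hg2
  have hinj := hind.injective
  have hne01 : (1 : Aq) ≠ mk0 v := by
    intro h
    have h2 : (0 : Fin 3) = 1 := hinj h
    exact absurd h2 (by decide)
  have hne02 : (1 : Aq) ≠ mk0 r := by
    intro h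
    have h2 : (0 : Fin 3) = 2 := hinj h
    exact absurd h2 (by decide)
  have hne12 : mk0 v ≠ mk0 r := by
    intro h
    have h2 : (1 : Fin 3) = 2 := hinj h
    exact absurd h2 (by decide)
  have hsr : LinearIndepOn k id (Set.range ![(1 : Aq), mk0 v, mk0 r]) :=
    (linearIndepOn_id_range_iff hinj).2 hind
  let B := Module.Basis.extend hsr
  have mem1 : (1 : Aq) ∈ hsr.extend (Set.subset_univ _) := hsr.subset_extend _ ⟨0, rfl⟩
  have memv : mk0 v ∈ hsr.extend (Set.subset_univ _) := hsr.subset_extend _ ⟨1, rfl⟩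
  have memr : mk0 r ∈ hsr.extend (Set.subset_univ _) := hsr.subset_extend _ ⟨2, rfl⟩
  let φ : Aq →ₗ[k] k := B.coord ⟨mk0 v, memv⟩
  let χ : Aq →ₗ[k] k := B.coord ⟨mk0 r, memr⟩
  have hBself : ∀ (x : Aq) (hx : x ∈ hsr.extend (Set.subset_univ _)), B ⟨x, hx⟩ = x :=
    fun x hx => Module.Basis.extend_apply_self hsr ⟨x, hx⟩
  have hφv : φ (mk0 v) = 1 := by
    have hstep : φ (B ⟨mk0 v, memv⟩) = 1 := by
      rw [Module.Basis.coord_apply, Module.Basis.repr_self, Finsupp.single_eq_same]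
    rw [hBself (mk0 v) memv] at hstep
    exact hstep
  have hχr : χ (mk0 r) = 1 := by
    have hstep : χ (B ⟨mk0 r, memr⟩) = 1 := by
      rw [Module.Basis.coord_apply, Module.Basis.repr_self, Finsupp.single_eq_same]
    rw [hBself (mk0 r) memr] at hstep
    exact hstep
  have hφ1 : φ ((1 : Aq)) = 0 := by
    have hstep : φ (B ⟨(1 : Aq), mem1⟩) = 0 := by
      rw [Module.Basis.coord_apply, Module.Basis.repr_self, Finsupp.single_eq_of_ne (by intro h; exact hne01 (congrArg Subtype.val h).symm)]
    rw [hBself ((1 : Aq)) mem1] at hstep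
    exact hstep
  have hχ1 : χ ((1 : Aq)) = 0 := by
    have hstep : χ (B ⟨(1 : Aq), mem1⟩) = 0 := by
      rw [Module.Basis.coord_apply, Module.Basis.repr_self, Finsupp.single_eq_of_ne (by intro h; exact hne02 (congrArg Subtype.val h).symm)]
    rw [hBself ((1 : Aq)) mem1] at hstep
    exact hstep
  have hφr : φ (mk0 r) = 0 := by
    have hstep : φ (B ⟨mk0 r, memr⟩) = 0 := by
      rw [Module.Basis.coord_apply, Module.Basis.repr_self, Finsupp.single_eq_of_ne (by intro h; exact hne12 (congrArg Subtype.val h))]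
    rw [hBself (mk0 r) memr] at hstep
    exact hstep
  have hχv : χ (mk0 v) = 0 := by
    have hstep : χ (B ⟨mk0 v, memv⟩) = 0 := by
      rw [Module.Basis.coord_apply, Module.Basis.repr_self, Finsupp.single_eq_of_ne (by intro h; exact hne12 (congrArg Subtype.val h).symm)]
    rw [hBself (mk0 v) memv] at hstep
    exact hstep
  letI instM := @mod3module k _ Aq _ _ π φ χ hπalg hsq hφ1 hχ1
  letI instT := @mod3tower k _ Aq _ _ π φ χ hπalg hsq hφ1 hχ1
  let DD : @Derivation k Aq (k × k × k) CommRing.toCommSemiring CommRing.toCommSemiring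
      AddCommGroup.toAddCommMonoid _ instM _ :=
    @mod3der k _ Aq _ _ π φ χ hπalg hsq hφ1 hχ1
  let L := @Derivation.liftKaehlerDifferential k Aq _ _ _ (k × k × k) _ _ instM instT DD
  -- π, φ, χ values on mk0 c₁ and mk0 c₂
  have hπsmul : ∀ (c : k) (x : ↥R), π (c • mk0 x) = c * π (mk0 x) := by
    intro c x
    rw [← hmks, hπmk, hπmk, hπ₀, hπ₀]
    have e : ((c • x : ↥R) : PowerSeries k) = c • (x : PowerSeries k) := rfl
    rw [e, smul_eq_C_mul, map_mul, constantCoeff_C]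
  have hπv : π (mk0 v) = 0 := by rw [hπmk, hπ₀]; exact hv0
  have hπr : π (mk0 r) = 0 := by rw [hπmk, hπ₀]; exact hr0
  -- the main computation
  have hmapω : (KaehlerDifferential.map k k ↥R Aq) ω
      = c₁ • (KaehlerDifferential.D k Aq (mk0 r)) - c₂ • (KaehlerDifferential.D k Aq (mk0 v)) := by
    rw [hω, map_sub, map_sub, LinearMap.map_smul, LinearMap.map_smul,
      KaehlerDifferential.map_D, KaehlerDifferential.map_D, KaehlerDifferential.map_D]
    have h0 : algebraMap ↥R Aq uR = 0 := Ideal.Quotient.eq_zero_iff_mem.2 huR2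
    rw [h0, map_zero, sub_zero]
    rfl
  have hLsmul : ∀ (c : ↥R) (ξ : Ω[Aq⁄k]), L (c • ξ) = (mk0 c) • L ξ := by
    intro c ξ
    have h1 : c • ξ = (mk0 c) • ξ := rfl
    rw [h1, map_smul]
  have hact : ∀ (a : Aq) (mm : k × k × k),
      a • mm = (π a * mm.1, π a * mm.2.1, π a * mm.2.2 + φ a * mm.1 + χ a * mm.2.1) :=
    fun a mm => rfl
  have hDD : ∀ x : Aq, DD x = (χ x, -φ x, 0) := fun x => rfl
  have hLD : ∀ x : Aq, L (KaehlerDifferential.D k Aq x) = DD x :=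
    fun x => @Derivation.liftKaehlerDifferential_comp_D k Aq _ _ _ (k × k × k) _ _ instM instT DD x
  have hLval : L ((KaehlerDifferential.map k k ↥R Aq) ω)
      = (0, 0, ((dd+1:ℕ):k) * 1 + ((nn+1:ℕ):k) * 1) := by
    rw [hmapω, map_sub, hLsmul, hLsmul, hLD, hLD, hDD, hDD]
    have hmc₁ : mk0 c₁ = ((dd+1:ℕ):k) • mk0 v := by rw [hc₁, hmks]
    have hmc₂ : mk0 c₂ = ((nn+1:ℕ):k) • mk0 r := by rw [hc₂, hmks]
    rw [hmc₁, hmc₂, hact, hact]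
    simp only [map_smul, smul_eq_mul, hπsmul, hπv, hπr, hφv, hφr, hχv, hχr]
    refine Prod.ext ?_ (Prod.ext ?_ ?_)
    · show _ - _ = (0:k)
      simp
    · show _ - _ = (0:k)
      simp
    · show _ - _ = _
      push_cast
      ring
  have hmapne : (KaehlerDifferential.map k k ↥R Aq) ω ≠ 0 := by
    intro h0
    rw [h0, map_zero] at hLval
    have h3 : (0:k) = ((dd+1:ℕ):k) * 1 + ((nn+1:ℕ):k) * 1 := congrArg (fun p : k×k×k => p.2.2) hLval
    rw [mul_one, mul_one, ← Nat.cast_add] at h3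
    exact Nat.cast_ne_zero.2 (by omega) h3.symm
  refine ⟨ω, ?_, ?_, ?_⟩
  · -- lam ω = 0
    rw [hω, map_sub, map_sub, LinearMap.map_smul, LinearMap.map_smul, hlam, hlam, hlam]
    have e1 : c₁ • derivativeFun (r : PowerSeries k)
        = C ((dd+1:ℕ):k) * ((v:PowerSeries k) * derivativeFun (r:PowerSeries k)) := by
      show ((c₁ : PowerSeries k)) * derivativeFun (r : PowerSeries k) = _
      rw [hc₁]
      show (((dd+1:ℕ):k) • (v : PowerSeries k)) * derivativeFun (r : PowerSeries k) = _
      rw [smul_eq_C_mul]; ring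
    have e2 : c₂ • derivativeFun (v : PowerSeries k)
        = C ((nn+1:ℕ):k) * ((r:PowerSeries k) * derivativeFun (v:PowerSeries k)) := by
      show ((c₂ : PowerSeries k)) * derivativeFun (v : PowerSeries k) = _
      rw [hc₂]
      show (((nn+1:ℕ):k) • (r : PowerSeries k)) * derivativeFun (v : PowerSeries k) = _
      rw [smul_eq_C_mul]; ring
    have e3 : ((uR : PowerSeries k)) = X^(nn+dd+3) * σ := by
      rw [huRdef]
      show ((aR : PowerSeries k)) * (v : PowerSeries k) = _
      rw [haR]
      exact hz
    rw [e1, e2, e3, key3, hσ]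
    ring
  · -- nonvanishing modulo m²
    exact hmapne
  · -- not in the intersection
    intro hinf
    have h1 : ω ∈ ((mxl R)^(1+1) • ⊤ : Submodule ↥R (Ω[↥R⁄k])) :=
      (Submodule.mem_iInf _).1 hinf 1
    apply hmapne
    refine Submodule.smul_induction_on h1 ?_ ?_
    · intro c hc x _
      rw [LinearMap.map_smul]
      have h2 : c • ((KaehlerDifferential.map k k ↥R Aq) x)
          = (mk0 c) • ((KaehlerDifferential.map k k ↥R Aq) x) :=
        rfl
      have hc2 : c ∈ (mxl R)^2 := by
        have : (mxl R)^(1+1) = (mxl R)^2 := by norm_num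
        rwa [this] at hc
      rw [h2, Ideal.Quotient.eq_zero_iff_mem.2 hc2]
      exact zero_smul ↥R ((KaehlerDifferential.map k k ↥R Aq) x)
    · intro x y hx hy
      rw [map_add, hx, hy, add_zero]

theorem stmt2 {k : Type*} [Field k] [IsAlgClosed k] [CharZero k]
    (R : Subalgebra k (PowerSeries k)) (hR : R ≠ ⊤)
    (hN : ∃ N : ℕ, 1 ≤ N ∧ ∀ g : PowerSeries k, (X : PowerSeries k) ^ N * g ∈ R)
    (lam : Ω[↥R⁄k] →ₗ[↥R] PowerSeries k)
    (hlam : ∀ f : R, lam (KaehlerDifferential.D k ↥R f) = derivativeFun (f : PowerSeries k))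
    (hC : ¬ ∀ r : R, (∀ g : PowerSeries k, (r : PowerSeries k) * g ∈ R) → r ∈ (mxl R) ^ 2) :
    ∃ ω : Ω[↥R⁄k], lam ω = 0 ∧
      (KaehlerDifferential.map k k ↥R (↥R ⧸ (mxl R) ^ 2)) ω ≠ 0 ∧
      ω ∉ ⨅ l : ℕ, ((mxl R) ^ (l + 1) • ⊤ : Submodule ↥R (Ω[↥R⁄k])) := by
  exact stmt2aux R hR hN lam hlam hC

end
end

section
/- Assume C_R ⊆ m_R². Then for all α, β ∈ C_R/x₁ := {c/x₁ : c ∈ C_R} ⊆ k⟦t⟧ one has α·β ∈ C_R. Consequently, the k-subalgebra S = R[C_R/x₁] of k⟦t⟧ generated by R and C_R/x₁ equals R + C_R/x₁ = R + t^{c_R − a₁}·k⟦t⟧ as a subset of k⟦t⟧. -/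
/-!
Every element of the conductor lies in `m_R²`, so has order at least `2a₁`; hence `x₁ * h ∈ C_R`
forces `x₁ ∣ h`, and for `α, β` in the colon ideal `C_R : x₁` (our model of `C_R/x₁`) the product
`α * β = (α / x₁) * (x₁ * β)` lies in `C_R`. So `R + (C_R : x₁)` is closed under multiplication
and is the algebra generated. Finally `C_R = X^c k⟦X⟧` and `x₁` is `X^a₁` times a unit, whence
`C_R : x₁ = X^(c - a₁) k⟦X⟧`.
-/

open PowerSeries
set_option synthInstance.maxHeartbeats 1000000
set_option maxHeartbeats 1000000

noncomputable section

namespace PowerSeries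

theorem X_pow_dvd_iff_le_order {R : Type*} [Semiring R] {n : ℕ} {f : R⟦X⟧} :
    X ^ n ∣ f ↔ (n : ℕ∞) ≤ f.order := by
  rw [order_eq_emultiplicity_X, pow_dvd_iff_le_emultiplicity]

variable {k : Type*} [Field k]

theorem associated_X_pow_of_order_eq {f : k⟦X⟧} {n : ℕ} (h : f.order = n) :
    Associated (X ^ n) f := by
  have hf : f ≠ 0 := by rintro rfl; simp at h
  refine ⟨(isUnit_divided_by_X_pow_order hf).unit, ?_⟩
  simpa [h] using X_pow_order_mul_divXPowOrder (f := f)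

theorem X_pow_dvd_X_pow_mul_iff {c a : ℕ} {f : k⟦X⟧} : X ^ c ∣ X ^ a * f ↔ X ^ (c - a) ∣ f := by
  rcases le_total a c with hac | hca
  · rw [← Nat.add_sub_cancel' hac, pow_add, Nat.add_sub_cancel_left,
      mul_dvd_mul_iff_left (pow_ne_zero _ X_ne_zero)]
  · simpa [Nat.sub_eq_zero_of_le hca] using (pow_dvd_pow X hca).mul_right f

theorem mem_iff_X_pow_dvd_of_isLeast {I : Ideal k⟦X⟧} {c : ℕ} (hc : IsLeast {n | X ^ n ∈ I} c)
    {f : k⟦X⟧} : f ∈ I ↔ X ^ c ∣ f := by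
  refine ⟨fun hf => ?_, fun hf => I.mem_of_dvd hf hc.1⟩
  rcases eq_or_ne f 0 with rfl | hf0
  · exact dvd_zero _
  have hfX : Associated (X ^ f.order.toNat) f :=
    associated_X_pow_of_order_eq (ENat.natCast_toNat (order_eq_top.not.2 hf0)).symm
  exact (pow_dvd_pow X (hc.2 (I.mem_of_dvd hfX.symm.dvd hf))).trans hfX.dvd

theorem mem_colon_singleton_iff_X_pow_dvd {I : Ideal k⟦X⟧} {c a : ℕ} {x h : k⟦X⟧}
    (hc : IsLeast {n | X ^ n ∈ I} c) (hx : Associated (X ^ a) x) :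
    h ∈ I.colon {x} ↔ X ^ (c - a) ∣ h := by
  rw [Submodule.mem_colon_singleton, smul_eq_mul, mem_iff_X_pow_dvd_of_isLeast hc,
    ← (hx.mul_left h).dvd_iff_dvd_right, mul_comm, X_pow_dvd_X_pow_mul_iff]

theorem dvd_of_X_pow_add_dvd_mul {a : ℕ} {x h : k⟦X⟧} (hx : Associated (X ^ a) x)
    (hxh : X ^ (a + a) ∣ x * h) : x ∣ h := by
  rw [← (hx.mul_right h).dvd_iff_dvd_right, X_pow_dvd_X_pow_mul_iff, Nat.add_sub_cancel] at hxh
  exact hx.symm.dvd.trans hxh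

end PowerSeries

theorem Ideal.mul_mem_of_dvd_of_mem_colon_singleton {A : Type*} [CommSemiring A] {I : Ideal A}
    {x α β : A} (hα : x ∣ α) (hβ : β ∈ I.colon {x}) : α * β ∈ I := by
  obtain ⟨w, rfl⟩ := hα
  rw [Submodule.mem_colon_singleton, smul_eq_mul] at hβ
  simpa only [mul_comm, mul_left_comm] using I.mul_mem_left w hβ

namespace Subalgebra

variable {K A : Type*} [CommSemiring K] [CommSemiring A] [Algebra K A] (R : Subalgebra K A)

def conductor : Ideal A where
  carrier := {f | ∀ g, f * g ∈ R}
  zero_mem' g := by simp only [zero_mul, zero_mem]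
  add_mem' ha hb g := by simpa only [add_mul] using R.add_mem (ha g) (hb g)
  smul_mem' c f hf g := by simpa only [smul_eq_mul, mul_left_comm, mul_assoc] using hf (c * g)

variable {R}

theorem mem_conductor_iff {f : A} : f ∈ R.conductor ↔ ∀ g, f * g ∈ R := Iff.rfl

theorem mem_of_mem_conductor {f : A} (hf : f ∈ R.conductor) : f ∈ R := by
  simpa using hf 1

theorem coe_adjoin_union_ideal {I : Ideal A} (hI : ∀ a ∈ I, ∀ b ∈ I, a * b ∈ R) :
    (Algebra.adjoin K ((R : Set A) ∪ I) : Set A) = {f | ∃ r ∈ R, ∃ i ∈ I, f = r + i} := by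
  let S : Subalgebra K A := (Subalgebra.toSubmodule R ⊔ I.restrictScalars K).toSubalgebra
    (Submodule.mem_sup_left R.one_mem) fun x y hx hy => by
      obtain ⟨r₁, hr₁, i₁, hi₁, rfl⟩ := Submodule.mem_sup.1 hx
      obtain ⟨r₂, hr₂, i₂, hi₂, rfl⟩ := Submodule.mem_sup.1 hy
      refine Submodule.mem_sup.2 ⟨r₁ * r₂ + i₁ * i₂, R.add_mem (R.mul_mem hr₁ hr₂) (hI _ hi₁ _ hi₂),
        r₁ * i₂ + i₁ * r₂, I.add_mem (I.mul_mem_left _ hi₂) (I.mul_mem_right _ hi₁), by ring⟩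
  have hS : (S : Set A) = {f | ∃ r ∈ R, ∃ i ∈ I, f = r + i} := by
    ext f
    change f ∈ Subalgebra.toSubmodule R ⊔ I.restrictScalars K ↔ _
    simp only [Submodule.mem_sup, mem_toSubmodule, Submodule.restrictScalars_mem, eq_comm]
    rfl
  rw [← hS]
  congr 1
  refine le_antisymm (Algebra.adjoin_le (Set.union_subset ?_ ?_)) ?_
  · exact fun r hr => Submodule.mem_sup_left hr
  · exact fun i hi => Submodule.mem_sup_right hi
  · intro f hf
    obtain ⟨r, hr, i, hi, rfl⟩ := Submodule.mem_sup.1 hf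
    exact add_mem (Algebra.subset_adjoin (Or.inl hr)) (Algebra.subset_adjoin (Or.inr hi))

end Subalgebra

theorem X_pow_dvd_of_mem_mxl_sq {k : Type*} [Field k] {R : Subalgebra k k⟦X⟧} {a : ℕ}
    (ha : ∀ f ∈ R, f ≠ 0 → constantCoeff f = 0 → (a : ℕ∞) ≤ f.order) {r : R}
    (hr : r ∈ mxl R ^ 2) : X ^ (a + a) ∣ (r : k⟦X⟧) := by
  have hmxl : mxl R ≤ (Ideal.span {X ^ a}).comap R.val := by
    intro r hr
    rw [Ideal.mem_comap, Ideal.mem_span_singleton]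
    rcases eq_or_ne (r : k⟦X⟧) 0 with h0 | h0
    · simp [h0]
    · exact X_pow_dvd_iff_le_order.2 (ha r r.2 h0 hr)
  have hsq := (Ideal.pow_right_mono hmxl 2).trans (Ideal.le_comap_pow _ 2) hr
  rwa [Ideal.span_singleton_pow, Ideal.mem_comap, Ideal.mem_span_singleton, ← pow_mul, mul_two]
    at hsq

theorem stmt5_general {k : Type*} [Field k]
    (R : Subalgebra k (PowerSeries k))
    (c : ℕ) (hc : IsLeast {n : ℕ | ∀ g : PowerSeries k, (X : PowerSeries k) ^ n * g ∈ R} c)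
    (a1 : ℕ) (x1 : PowerSeries k)
    (hx1ord : x1.order = a1)
    (ha1min : ∀ f ∈ R, f ≠ 0 → (constantCoeff : PowerSeries k →+* k) f = 0 → (a1 : ℕ∞) ≤ f.order)
    (hC : ∀ r : R, (∀ g : PowerSeries k, (r : PowerSeries k) * g ∈ R) → r ∈ (mxl R) ^ 2) :
    -- products of two elements of C_R/x₁ land in C_R
    (∀ α β : PowerSeries k, (∀ g : PowerSeries k, (x1 * α) * g ∈ R) →
      (∀ g : PowerSeries k, (x1 * β) * g ∈ R) → ∀ g : PowerSeries k, (α * β) * g ∈ R) ∧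
    -- S = R + C_R/x₁ as a subset of k⟦t⟧
    ((Algebra.adjoin k ((R : Set (PowerSeries k)) ∪
        {h : PowerSeries k | ∀ g : PowerSeries k, (x1 * h) * g ∈ R}) : Set (PowerSeries k))
      = {f : PowerSeries k | ∃ r ∈ R, ∃ h : PowerSeries k,
          (∀ g : PowerSeries k, (x1 * h) * g ∈ R) ∧ f = r + h}) ∧
    -- S = R + t^(c_R - a₁)·k⟦t⟧ as a subset of k⟦t⟧
    ((Algebra.adjoin k ((R : Set (PowerSeries k)) ∪
        {h : PowerSeries k | ∀ g : PowerSeries k, (x1 * h) * g ∈ R}) : Set (PowerSeries k))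
      = {f : PowerSeries k | ∃ r ∈ R, ∃ g : PowerSeries k,
          f = r + (X : PowerSeries k) ^ (c - a1) * g}) := by
  set I := R.conductor.colon {x1}
  have hx1 : Associated (X ^ a1) x1 := associated_X_pow_of_order_eq hx1ord
  have hmemI : ∀ h, h ∈ I ↔ ∀ g, (x1 * h) * g ∈ R := fun h => by
    rw [Submodule.mem_colon_singleton, smul_eq_mul, mul_comm, Subalgebra.mem_conductor_iff]
  have hdvd : ∀ h ∈ I, x1 ∣ h := fun h hh =>
    have hx1h := (hmemI h).1 hh
    dvd_of_X_pow_add_dvd_mul hx1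
      (X_pow_dvd_of_mem_mxl_sq ha1min (hC ⟨_, Subalgebra.mem_of_mem_conductor hx1h⟩ hx1h))
  have hmul : ∀ α ∈ I, ∀ β ∈ I, α * β ∈ R.conductor := fun α hα β hβ =>
    Ideal.mul_mem_of_dvd_of_mem_colon_singleton (hdvd α hα) hβ
  have hIset : {h | ∀ g, (x1 * h) * g ∈ R} = (I : Set k⟦X⟧) := Set.ext fun h => (hmemI h).symm
  have hadj := Subalgebra.coe_adjoin_union_ideal fun a ha b hb =>
    Subalgebra.mem_of_mem_conductor (hmul a ha b hb)
  refine ⟨fun α β hα hβ => hmul α ((hmemI α).2 hα) β ((hmemI β).2 hβ), ?_, ?_⟩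
  · rw [hIset, hadj]
    simp only [hmemI]
  · have hIX : ∀ h, h ∈ I ↔ X ^ (c - a1) ∣ h := fun _ =>
      mem_colon_singleton_iff_X_pow_dvd (I := R.conductor) hc hx1
    rw [hIset, hadj]
    simp [hIX, dvd_def]

theorem stmt5 {k : Type*} [Field k] [IsAlgClosed k] [CharZero k]
    (R : Subalgebra k (PowerSeries k)) (hR : R ≠ ⊤)
    (hN : ∃ N : ℕ, 1 ≤ N ∧ ∀ g : PowerSeries k, (X : PowerSeries k) ^ N * g ∈ R)
    (c : ℕ) (hc : IsLeast {n : ℕ | ∀ g : PowerSeries k, (X : PowerSeries k) ^ n * g ∈ R} c)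
    (a1 : ℕ) (ha1pos : 0 < a1) (x1 : PowerSeries k) (hx1R : x1 ∈ R)
    (hx1ord : x1.order = a1)
    (ha1min : ∀ f ∈ R, f ≠ 0 → (constantCoeff : PowerSeries k →+* k) f = 0 → (a1 : ℕ∞) ≤ f.order)
    (hC : ∀ r : R, (∀ g : PowerSeries k, (r : PowerSeries k) * g ∈ R) → r ∈ (mxl R) ^ 2) :
    -- products of two elements of C_R/x₁ land in C_R
    (∀ α β : PowerSeries k, (∀ g : PowerSeries k, (x1 * α) * g ∈ R) →
      (∀ g : PowerSeries k, (x1 * β) * g ∈ R) → ∀ g : PowerSeries k, (α * β) * g ∈ R) ∧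
    -- S = R + C_R/x₁ as a subset of k⟦t⟧
    ((Algebra.adjoin k ((R : Set (PowerSeries k)) ∪
        {h : PowerSeries k | ∀ g : PowerSeries k, (x1 * h) * g ∈ R}) : Set (PowerSeries k))
      = {f : PowerSeries k | ∃ r ∈ R, ∃ h : PowerSeries k,
          (∀ g : PowerSeries k, (x1 * h) * g ∈ R) ∧ f = r + h}) ∧
    -- S = R + t^(c_R - a₁)·k⟦t⟧ as a subset of k⟦t⟧
    ((Algebra.adjoin k ((R : Set (PowerSeries k)) ∪
        {h : PowerSeries k | ∀ g : PowerSeries k, (x1 * h) * g ∈ R}) : Set (PowerSeries k))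
      = {f : PowerSeries k | ∃ r ∈ R, ∃ g : PowerSeries k,
          f = r + (X : PowerSeries k) ^ (c - a1) * g}) :=
  stmt5_general R c hc a1 x1 hx1ord ha1min hC

end
end

section
/- Assume C_R ⊆ m_R². Then R ⊆ S, the quotient S/R is a k-vector space (it is killed by m_R), and dim_k (S/R) = s(R), where s(R) = dim_k (C_R + x₁R)/(x₁R) is the reduced type of R. -/
open PowerSeries
set_option synthInstance.maxHeartbeats 1000000
set_option maxHeartbeats 1000000

noncomputable section

def condIdeal {k : Type*} [Field k] (R : Subalgebra k (PowerSeries k)) : Ideal R where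
  carrier := {r : R | ∀ g : PowerSeries k, (r : PowerSeries k) * g ∈ R}
  add_mem' := by
    intro a b ha hb g
    have := R.add_mem (ha g) (hb g)
    simpa [add_mul] using this
  zero_mem' := by
    intro g
    simpa using R.zero_mem
  smul_mem' := by
    intro c x hx g
    have h : ((c • x : R) : PowerSeries k) * g
        = (c : PowerSeries k) * ((x : PowerSeries k) * g) := by
      rw [smul_eq_mul, MulMemClass.coe_mul]
      ring
    rw [h]
    exact R.mul_mem c.2 (hx g)

/-- The reduced type `s(R) = dim_k (C_R + x₁R)/(x₁R)`, computed as the dimension of the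
image of the conductor in `R/(x₁)`. -/
def redType {k : Type*} [Field k] (R : Subalgebra k (PowerSeries k)) (x1 : R) : ℕ :=
  Module.finrank k (Submodule.restrictScalars k
    (Ideal.map (Ideal.Quotient.mk (Ideal.span {x1})) (condIdeal R)))


/-!
Since `x₁` has minimal order among the non-units of `R`, it divides every non-unit of `R`, in
particular every element of the conductor. Hence `V = C_R / x₁ = {h | x₁ h k⟦t⟧ ⊆ R}` is an ideal
of `k⟦t⟧`, `S = R + V`, and `m_R V ⊆ x₁ V ⊆ C_R ⊆ R`. Multiplication by `x₁` maps `V` onto `C_R`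
and `V ∩ R` onto `C_R ∩ x₁ R`, so `S / R ≅ V / (V ∩ R) ≅ (C_R + x₁ R) / x₁ R`.
-/

namespace PowerSeries

variable {k : Type*} [Field k]

theorem dvd_of_order_le {f g : k⟦X⟧} (h : f.order ≤ g.order) : f ∣ g := by
  rcases eq_or_ne f 0 with rfl | hf
  · rw [order_zero, top_le_iff, order_eq_top] at h
    simp [h]
  rw [← X_pow_order_mul_divXPowOrder (f := f), (isUnit_divided_by_X_pow_order hf).mul_right_dvd,
    X_pow_dvd_iff]
  intro m hm
  refine coeff_of_lt_order _ (lt_of_lt_of_le ?_ h)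
  rwa [← ENat.natCast_toNat (order_eq_top.not.mpr hf), Nat.cast_lt]

end PowerSeries

section ConductorDiv

variable {k A : Type*} [CommRing k] [CommRing A] [Algebra k A] (R : Subalgebra k A) (x : A)

/-- When `x` divides every element of the conductor `C_R` of `R`, this is `C_R / x`. -/
def conductorDiv : Submodule k A where
  carrier := {h | ∀ g, x * h * g ∈ R}
  add_mem' {h h'} hh hh' g := by
    simpa only [mul_add, add_mul] using R.add_mem (hh g) (hh' g)
  zero_mem' g := by simp
  smul_mem' c h hh g := by
    simpa only [mul_smul_comm, smul_mul_assoc] using R.smul_mem (hh g) c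

variable {R x}

theorem mul_mem_of_mem_conductorDiv {h : A} (hh : h ∈ conductorDiv R x) : x * h ∈ R := by
  simpa using hh 1

theorem mul_mem_of_dvd_of_mem_conductorDiv {m h : A} (hm : x ∣ m) (hh : h ∈ conductorDiv R x) :
    m * h ∈ R := by
  obtain ⟨q, rfl⟩ := hm
  simpa only [mul_right_comm] using hh q

theorem mul_mem_conductorDiv (a : A) {h : A} (hh : h ∈ conductorDiv R x) :
    a * h ∈ conductorDiv R x := fun g => by
  convert hh (a * g) using 1
  ring

theorem mul_mem_sup_conductorDiv {a b : A}
    (ha : a ∈ Subalgebra.toSubmodule R ⊔ conductorDiv R x)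
    (hb : b ∈ Subalgebra.toSubmodule R ⊔ conductorDiv R x) :
    a * b ∈ Subalgebra.toSubmodule R ⊔ conductorDiv R x := by
  obtain ⟨r, hr, v, hv, rfl⟩ := Submodule.mem_sup.mp ha
  obtain ⟨r', hr', v', hv', rfl⟩ := Submodule.mem_sup.mp hb
  rw [show (r + v) * (r' + v') = r * r' + (r' * v + (r + v) * v') by ring]
  exact Submodule.add_mem_sup (R.mul_mem hr hr')
    (add_mem (mul_mem_conductorDiv r' hv) (mul_mem_conductorDiv _ hv'))

theorem mul_mem_of_dvd_of_mem_sup {m f : A} (hmR : m ∈ R) (hm : x ∣ m)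
    (hf : f ∈ Subalgebra.toSubmodule R ⊔ conductorDiv R x) : m * f ∈ R := by
  obtain ⟨r, hr, v, hv, rfl⟩ := Submodule.mem_sup.mp hf
  rw [mul_add]
  exact add_mem (R.mul_mem hmR hr) (mul_mem_of_dvd_of_mem_conductorDiv hm hv)

variable (R x) in
theorem toSubmodule_adjoin_union_conductorDiv :
    Subalgebra.toSubmodule (Algebra.adjoin k ((R : Set A) ∪ conductorDiv R x)) =
      Subalgebra.toSubmodule R ⊔ conductorDiv R x := by
  set p := Subalgebra.toSubmodule R ⊔ conductorDiv R x
  let T := p.toSubalgebra (Submodule.mem_sup_left R.one_mem) fun _ _ => mul_mem_sup_conductorDiv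
  have hle : Algebra.adjoin k ((R : Set A) ∪ conductorDiv R x) ≤ T :=
    Algebra.adjoin_le <| Set.union_subset (fun _ hr => (Submodule.mem_sup_left hr : _ ∈ p))
      (fun _ hv => (Submodule.mem_sup_right hv : _ ∈ p))
  exact le_antisymm hle (sup_le (fun _ hr => Algebra.subset_adjoin (Or.inl hr))
    (fun _ hv => Algebra.subset_adjoin (Or.inr hv)))

end ConductorDiv

section ConductorDivToQuotient

variable {k A : Type*} [CommRing k] [CommRing A] [Algebra k A] {R : Subalgebra k A}

variable (R) in
def conductorDivToQuotient (x : R) : conductorDiv R x →ₗ[k] R ⧸ Ideal.span {x} :=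
  (Ideal.Quotient.mkₐ k _).toLinearMap ∘ₗ
    LinearMap.codRestrict (Subalgebra.toSubmodule R)
      (LinearMap.mulLeft k (x : A) ∘ₗ (conductorDiv R x).subtype)
      fun h => mul_mem_of_mem_conductorDiv h.2

theorem conductorDivToQuotient_apply (x : R) (h : conductorDiv R x) :
    conductorDivToQuotient R x h = Ideal.Quotient.mk _ ⟨x * h, mul_mem_of_mem_conductorDiv h.2⟩ :=
  rfl

theorem ker_conductorDivToQuotient [IsDomain A] {x : R} (hx : (x : A) ≠ 0) :
    LinearMap.ker (conductorDivToQuotient R x) =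
      (Subalgebra.toSubmodule R).comap (conductorDiv R x).subtype := by
  ext h
  rw [LinearMap.mem_ker, conductorDivToQuotient_apply, Ideal.Quotient.eq_zero_iff_mem,
    Ideal.mem_span_singleton', Submodule.mem_comap]
  constructor
  · rintro ⟨r, hr⟩
    have hhr : (h : A) = r := mul_left_cancel₀ hx <| by
      rw [mul_comm _ (r : A)]
      exact congrArg Subtype.val hr.symm
    exact (hhr ▸ r.2 : (h : A) ∈ R)
  · intro hR
    exact ⟨⟨h, hR⟩, Subtype.ext (mul_comm _ _)⟩

theorem finrank_sup_quotient_eq_finrank_range [IsDomain A] {x : R} (hx : (x : A) ≠ 0) :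
    Module.finrank k (↥(Subalgebra.toSubmodule R ⊔ conductorDiv R x) ⧸
        (Subalgebra.toSubmodule R).comap (Subalgebra.toSubmodule R ⊔ conductorDiv R x).subtype) =
      Module.finrank k (LinearMap.range (conductorDivToQuotient R x)) := by
  rw [sup_comm, ← (LinearMap.quotientInfEquivSupQuotient _ _).finrank_eq,
    Submodule.comap_subtype_self, top_inf_eq, ← ker_conductorDivToQuotient hx]
  exact (conductorDivToQuotient R x).quotKerEquivRange.finrank_eq

end ConductorDivToQuotient

section PowerSeriesSubalgebra

variable {k : Type*} [Field k] {R : Subalgebra k k⟦X⟧}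

theorem constantCoeff_eq_zero_of_forall_mul_mem (hR : R ≠ ⊤) {c : k⟦X⟧}
    (hc : ∀ g, c * g ∈ R) : constantCoeff c = 0 := by
  by_contra h
  obtain ⟨u, rfl⟩ := isUnit_iff_constantCoeff.mpr (isUnit_iff_ne_zero.mpr h)
  exact hR (eq_top_iff.mpr fun f _ => by simpa using hc (↑u⁻¹ * f))

theorem dvd_of_mem_of_constantCoeff_eq_zero {x : k⟦X⟧}
    (hmin : ∀ f ∈ R, f ≠ 0 → constantCoeff f = 0 → x.order ≤ f.order)
    {f : k⟦X⟧} (hf : f ∈ R) (hf0 : constantCoeff f = 0) : x ∣ f := by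
  rcases eq_or_ne f 0 with rfl | hne
  · exact dvd_zero x
  · exact dvd_of_order_le (hmin f hf hne hf0)

theorem dvd_of_forall_mul_mem (hR : R ≠ ⊤) {x : k⟦X⟧}
    (hmin : ∀ f ∈ R, f ≠ 0 → constantCoeff f = 0 → x.order ≤ f.order)
    {c : k⟦X⟧} (hc : ∀ g, c * g ∈ R) : x ∣ c :=
  dvd_of_mem_of_constantCoeff_eq_zero hmin (by simpa using hc 1)
    (constantCoeff_eq_zero_of_forall_mul_mem hR hc)

theorem range_conductorDivToQuotient {x : R}
    (hdvd : ∀ c : k⟦X⟧, (∀ g, c * g ∈ R) → (x : k⟦X⟧) ∣ c) :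
    LinearMap.range (conductorDivToQuotient R x) =
      (Ideal.map (Ideal.Quotient.mk (Ideal.span {x})) (condIdeal R)).restrictScalars k := by
  ext y
  rw [Submodule.restrictScalars_mem,
    Ideal.mem_map_iff_of_surjective _ Ideal.Quotient.mk_surjective, LinearMap.mem_range]
  constructor
  · rintro ⟨h, rfl⟩
    refine ⟨_, ?_, (conductorDivToQuotient_apply x h).symm⟩
    exact fun g => h.2 g
  · rintro ⟨c, hc, rfl⟩
    obtain ⟨h, hh⟩ := hdvd c hc
    refine ⟨⟨h, fun g => hh ▸ hc g⟩, ?_⟩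
    exact congrArg (Ideal.Quotient.mk _) (Subtype.ext hh.symm)

end PowerSeriesSubalgebra

theorem stmt7_general {k : Type*} [Field k]
    (R : Subalgebra k (PowerSeries k)) (hR : R ≠ ⊤)
    (a1 : ℕ) (x1 : PowerSeries k) (hx1R : x1 ∈ R)
    (hx1ord : x1.order = a1)
    (ha1min : ∀ f ∈ R, f ≠ 0 → (constantCoeff : PowerSeries k →+* k) f = 0 → (a1 : ℕ∞) ≤ f.order)
    (S : Subalgebra k (PowerSeries k))
    (hS : S = Algebra.adjoin k ((R : Set (PowerSeries k)) ∪
        {h : PowerSeries k | ∀ g : PowerSeries k, (x1 * h) * g ∈ R})) :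
    -- R ⊆ S
    (R : Set (PowerSeries k)) ⊆ (S : Set (PowerSeries k)) ∧
    -- S/R is killed by m_R (so it is a k-vector space)
    (∀ m ∈ R, (constantCoeff : PowerSeries k →+* k) m = 0 → ∀ f ∈ S, m * f ∈ R) ∧
    -- dim_k (S/R) = s(R)
    Module.finrank k ((Subalgebra.toSubmodule S) ⧸
        ((Subalgebra.toSubmodule R).comap (Subalgebra.toSubmodule S).subtype))
      = redType R ⟨x1, hx1R⟩ := by
  have hx1 : x1 ≠ 0 := by
    rintro rfl
    simp at hx1ord
  rw [← hx1ord] at ha1min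
  have hSV : Subalgebra.toSubmodule S = Subalgebra.toSubmodule R ⊔ conductorDiv R x1 :=
    hS ▸ toSubmodule_adjoin_union_conductorDiv R x1
  refine ⟨fun f hf => hS ▸ Algebra.subset_adjoin (Or.inl hf), ?_, ?_⟩
  · intro m hm hm0 f hf
    exact mul_mem_of_dvd_of_mem_sup hm (dvd_of_mem_of_constantCoeff_eq_zero ha1min hm hm0)
      (hSV ▸ hf)
  · rw [hSV, finrank_sup_quotient_eq_finrank_range (x := ⟨x1, hx1R⟩) hx1,
      range_conductorDivToQuotient fun c hc => dvd_of_forall_mul_mem hR ha1min hc]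
    rfl

theorem stmt7 {k : Type*} [Field k] [IsAlgClosed k] [CharZero k]
    (R : Subalgebra k (PowerSeries k)) (hR : R ≠ ⊤)
    (hN : ∃ N : ℕ, 1 ≤ N ∧ ∀ g : PowerSeries k, (X : PowerSeries k) ^ N * g ∈ R)
    (a1 : ℕ) (ha1pos : 0 < a1) (x1 : PowerSeries k) (hx1R : x1 ∈ R)
    (hx1ord : x1.order = a1)
    (ha1min : ∀ f ∈ R, f ≠ 0 → (constantCoeff : PowerSeries k →+* k) f = 0 → (a1 : ℕ∞) ≤ f.order)
    (hC : ∀ r : R, (∀ g : PowerSeries k, (r : PowerSeries k) * g ∈ R) → r ∈ (mxl R) ^ 2)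
    (S : Subalgebra k (PowerSeries k))
    (hS : S = Algebra.adjoin k ((R : Set (PowerSeries k)) ∪
        {h : PowerSeries k | ∀ g : PowerSeries k, (x1 * h) * g ∈ R})) :
    -- R ⊆ S
    (R : Set (PowerSeries k)) ⊆ (S : Set (PowerSeries k)) ∧
    -- S/R is killed by m_R (so it is a k-vector space)
    (∀ m ∈ R, (constantCoeff : PowerSeries k →+* k) m = 0 → ∀ f ∈ S, m * f ∈ R) ∧
    -- dim_k (S/R) = s(R)
    Module.finrank k ((Subalgebra.toSubmodule S) ⧸
        ((Subalgebra.toSubmodule R).comap (Subalgebra.toSubmodule S).subtype))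
      = redType R ⟨x1, hx1R⟩ :=
  stmt7_general R hR a1 x1 hx1R hx1ord ha1min S hS
end
end
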